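/- Let X be an uncountable set and H an RKHS on X with kernel k. If ℓ∞(X) ⊆ H, then for X_n = {x : k(x,x) ≤ n} there is m with X_m uncountable, and every bounded function on X_m belongs to the RKHS H_m of the restricted kernel, with ‖f‖_∞ ≤ √m ‖f‖_{H_m}; by the closed graph theorem the norms ‖·‖_∞ and ‖·‖_{H_m} are equivalent on ℓ∞(X_m). -/

import Mathlib

/-!
Since `X` is the countable union of the sets `X_m`, one of them is uncountable. Every bounded
function on `X_m` is interpolated on `X_m` by some element of `H`; projecting it onto the closed
span `(span (range Φ))ᗮᗮ` of the features `Φ x`, `x ∈ X_m`, makes the interpolant unique and hence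
linear in the function. The interpolation map `ℓ∞(X_m) → H` has closed graph because point
evaluations are continuous on both sides, so it is bounded. The pointwise bound is Cauchy–Schwarz
with `‖Φ x‖² = k x x ≤ m`.
-/

open scoped RealInnerProductSpace ENNReal
open Submodule Set Filter Topology

theorem exists_nat_not_countable_setOf_le {X : Type*} (hX : ¬ Countable X) (f : X → ℝ) :
    ∃ m : ℕ, ¬ {x | f x ≤ m}.Countable := by
  by_contra! hcount
  refine hX (countable_univ_iff.mp ((countable_iUnion hcount).mono fun x _ => ?_))
  exact mem_iUnion.2 ⟨⌈f x⌉₊, Nat.le_ceil (f x)⟩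

theorem exists_bounded_extension_of_lp_infty {X : Type*} {s : Set X} (g : lp (fun _ : s => ℝ) ∞) :
    ∃ f : X → ℝ, (∃ C : ℝ, ∀ x, |f x| ≤ C) ∧ ∀ i : s, f i = g i := by
  classical
  refine ⟨fun x => if hx : x ∈ s then g ⟨x, hx⟩ else 0, ⟨‖g‖, fun x => ?_⟩, fun i => by simp⟩
  dsimp only
  split_ifs
  · exact lp.norm_apply_le_norm ENNReal.top_ne_zero g _
  · simp

theorem abs_real_inner_le_sqrt_mul_norm {H : Type*} [NormedAddCommGroup H]
    [InnerProductSpace ℝ H] {v : H} {c : ℝ} (hv : ⟪v, v⟫ ≤ c) (h : H) :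
    |⟪h, v⟫| ≤ √c * ‖h‖ := by
  have hnorm : ‖v‖ ≤ √c := by
    rw [← Real.sqrt_sq (norm_nonneg v), ← real_inner_self_eq_norm_sq]
    exact Real.sqrt_le_sqrt hv
  calc |⟪h, v⟫| ≤ ‖h‖ * ‖v‖ := abs_real_inner_le_norm h v
    _ ≤ √c * ‖h‖ := by rw [mul_comm]; gcongr

section Interpolation

variable {S H : Type*} [NormedAddCommGroup H] [InnerProductSpace ℝ H] (Φ : S → H)

theorem mem_orthogonal_span_range_of_inner_eq_zero {v : H} (hv : ∀ i, ⟪v, Φ i⟫ = 0) :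
    v ∈ (span ℝ (range Φ))ᗮ := by
  have hle : span ℝ (range Φ) ≤ (ℝ ∙ v)ᗮ :=
    span_le.2 <| range_subset_iff.2 fun i => mem_orthogonal_singleton_iff_inner_right.2 (hv i)
  exact (mem_orthogonal' _ _).2 fun u hu => mem_orthogonal_singleton_iff_inner_right.1 (hle hu)

variable {Φ} in
theorem eq_of_mem_orthogonal_orthogonal_span_range {v w : H}
    (hv : v ∈ (span ℝ (range Φ))ᗮᗮ) (hw : w ∈ (span ℝ (range Φ))ᗮᗮ)
    (hvw : ∀ i, ⟪v, Φ i⟫ = ⟪w, Φ i⟫) : v = w := by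
  have hperp : v - w ∈ (span ℝ (range Φ))ᗮ :=
    mem_orthogonal_span_range_of_inner_eq_zero Φ fun i => by rw [inner_sub_left, hvw, sub_self]
  have hzero : v - w ∈ (span ℝ (range Φ))ᗮ ⊓ (span ℝ (range Φ))ᗮᗮ := ⟨hperp, sub_mem hv hw⟩
  rwa [inf_orthogonal_eq_bot, Submodule.mem_bot, sub_eq_zero] at hzero

variable [CompleteSpace H]

theorem inner_starProjection_orthogonal_orthogonal_span_range (h : H) (i : S) :
    ⟪(span ℝ (range Φ))ᗮᗮ.starProjection h, Φ i⟫ = ⟪h, Φ i⟫ := by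
  have hΦ : Φ i ∈ (span ℝ (range Φ))ᗮᗮ :=
    le_orthogonal_orthogonal _ (subset_span (mem_range_self i))
  have := starProjection_inner_eq_zero h (Φ i) hΦ
  rw [inner_sub_left, sub_eq_zero] at this
  exact this.symm

theorem exists_linearMap_lp_infty_inner_eq
    (hΦ : ∀ g : lp (fun _ : S => ℝ) ∞, ∃ h : H, ∀ i, ⟪h, Φ i⟫ = g i) :
    ∃ T : lp (fun _ : S => ℝ) ∞ →ₗ[ℝ] H,
      ∀ g, T g ∈ (span ℝ (range Φ))ᗮᗮ ∧ ∀ i, ⟪T g, Φ i⟫ = g i := by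
  choose rep hrep using hΦ
  let P := (span ℝ (range Φ))ᗮᗮ.starProjection
  have hmem : ∀ g, P (rep g) ∈ (span ℝ (range Φ))ᗮᗮ := fun g => starProjection_apply_mem _ _
  have hinner : ∀ g i, ⟪P (rep g), Φ i⟫ = g i := fun g i => by
    rw [inner_starProjection_orthogonal_orthogonal_span_range, hrep]
  refine ⟨{ toFun := fun g => P (rep g), map_add' := ?_, map_smul' := ?_ },
    fun g => ⟨hmem g, hinner g⟩⟩
  · intro g₁ g₂
    refine eq_of_mem_orthogonal_orthogonal_span_range (hmem _) (add_mem (hmem _) (hmem _)) ?_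
    intro i
    rw [inner_add_left, hinner, hinner, hinner, lp.coeFn_add, Pi.add_apply]
  · intro c g
    refine eq_of_mem_orthogonal_orthogonal_span_range (hmem _) (smul_mem _ _ (hmem _)) ?_
    intro i
    rw [real_inner_smul_left, hinner, hinner, lp.coeFn_smul, Pi.smul_apply, smul_eq_mul,
      RingHom.id_apply]

theorem LinearMap.continuous_of_inner_eq_lp_infty (T : lp (fun _ : S => ℝ) ∞ →ₗ[ℝ] H)
    (hT : ∀ g, T g ∈ (span ℝ (Set.range Φ))ᗮᗮ ∧ ∀ i, ⟪T g, Φ i⟫ = g i) : Continuous T := by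
  refine T.continuous_of_seq_closed_graph fun u g y hu hy => ?_
  have hy_mem : y ∈ (span ℝ (Set.range Φ))ᗮᗮ :=
    (isClosed_orthogonal _).mem_of_tendsto hy (Eventually.of_forall fun n => (hT (u n)).1)
  refine eq_of_mem_orthogonal_orthogonal_span_range hy_mem (hT g).1 fun i => ?_
  have hlim : Tendsto (fun n => u n i) atTop (𝓝 ⟪y, Φ i⟫) := by
    simpa only [Function.comp_apply, (hT _).2] using
      hy.inner (𝕜 := ℝ) (tendsto_const_nhds (x := Φ i))
  have heval : Tendsto (fun n => u n i) atTop (𝓝 (g i)) :=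
    ((lp.evalCLM ℝ (fun _ : S => ℝ) ∞ i).continuous.tendsto g).comp hu
  rw [(hT g).2, tendsto_nhds_unique hlim heval]

theorem exists_continuousLinearMap_lp_infty_inner_eq
    (hΦ : ∀ g : lp (fun _ : S => ℝ) ∞, ∃ h : H, ∀ i, ⟪h, Φ i⟫ = g i) :
    ∃ T : lp (fun _ : S => ℝ) ∞ →L[ℝ] H, ∀ g i, ⟪T g, Φ i⟫ = g i := by
  obtain ⟨T, hT⟩ := exists_linearMap_lp_infty_inner_eq Φ hΦ
  exact ⟨⟨T, T.continuous_of_inner_eq_lp_infty Φ hT⟩, fun g => (hT g).2⟩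

end Interpolation

theorem bounded_functions_in_restricted_RKHS_general
    {X : Type*} (hX : ¬ Countable X)
    (H : Type*) [NormedAddCommGroup H] [InnerProductSpace ℝ H] [CompleteSpace H]
    (ι : H →ₗ[ℝ] (X → ℝ))
    (k : X → X → ℝ) (Φ : X → H)
    (hfeat : ∀ x y : X, ι (Φ x) y = k y x)
    (hrep : ∀ (h : H) (x : X), ι h x = ⟪h, Φ x⟫)
    (hsub : ∀ f : X → ℝ, (∃ C : ℝ, ∀ x, |f x| ≤ C) → f ∈ Set.range ι) :
    ∃ m : ℕ, ¬ ({x : X | k x x ≤ (m : ℝ)} : Set X).Countable ∧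
      ∃ K : ℝ, 0 < K ∧
        ∀ f : X → ℝ, (∃ C : ℝ, ∀ x, |f x| ≤ C) →
          ∃ h : H, (∀ x ∈ {x : X | k x x ≤ (m : ℝ)}, ι h x = f x) ∧
            (∀ x ∈ {x : X | k x x ≤ (m : ℝ)}, |f x| ≤ Real.sqrt m * ‖h‖) ∧
            ‖h‖ ≤ K * ⨆ x : {x : X | k x x ≤ (m : ℝ)}, |f x| := by
  obtain ⟨m, hm⟩ := exists_nat_not_countable_setOf_le hX fun x => k x x
  set s := {x : X | k x x ≤ (m : ℝ)}
  have hinterp : ∀ g : lp (fun _ : s => ℝ) ∞, ∃ h : H, ∀ i : s, ⟪h, Φ i⟫ = g i := by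
    intro g
    obtain ⟨f, hf, hfg⟩ := exists_bounded_extension_of_lp_infty g
    obtain ⟨h, rfl⟩ := hsub f hf
    exact ⟨h, fun i => by rw [← hrep, hfg]⟩
  obtain ⟨T, hT⟩ := exists_continuousLinearMap_lp_infty_inner_eq (fun i : s => Φ i) hinterp
  refine ⟨m, hm, ‖T‖ + 1, by positivity, fun f ⟨C, hC⟩ => ?_⟩
  let g : lp (fun _ : s => ℝ) ∞ :=
    ⟨fun i => f i, memℓp_infty ⟨C, by rintro _ ⟨i, rfl⟩; exact hC i⟩⟩
  have hTg : ∀ x ∈ s, ι (T g) x = f x := fun x hx => by rw [hrep]; exact hT g ⟨x, hx⟩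
  refine ⟨T g, hTg, fun x hx => ?_, ?_⟩
  · have hkx : ⟪Φ x, Φ x⟫ ≤ m := by rw [← hrep, hfeat]; exact hx
    rw [← hTg x hx, hrep]
    exact abs_real_inner_le_sqrt_mul_norm hkx _
  · calc ‖T g‖ ≤ ‖T‖ * ‖g‖ := T.le_opNorm g
      _ ≤ (‖T‖ + 1) * ‖g‖ := by gcongr; linarith
      _ = (‖T‖ + 1) * ⨆ x : s, |f x| := by rw [lp.norm_eq_ciSup]; rfl

/-- If `X` is uncountable and the RKHS `H` on `X` with kernel `k` contains all bounded
functions, then some sublevel set `X_m = {x | k x x ≤ m}` is uncountable, every bounded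
function on `X_m` is the restriction of some `h ∈ H` with `|f x| ≤ √m ‖h‖` on `X_m`,
and by the closed graph theorem the sup norm and the `H_m`-norm are equivalent:
some representative `h` satisfies `‖h‖ ≤ K · sup_{x ∈ X_m} |f x|`. -/
theorem bounded_functions_in_restricted_RKHS
    {X : Type*} (hX : ¬ Countable X)
    (H : Type*) [NormedAddCommGroup H] [InnerProductSpace ℝ H] [CompleteSpace H]
    (ι : H →ₗ[ℝ] (X → ℝ)) (hinj : Function.Injective ι)
    (k : X → X → ℝ) (Φ : X → H)
    (hfeat : ∀ x y : X, ι (Φ x) y = k y x)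
    (hrep : ∀ (h : H) (x : X), ι h x = ⟪h, Φ x⟫)
    (hsub : ∀ f : X → ℝ, (∃ C : ℝ, ∀ x, |f x| ≤ C) → f ∈ Set.range ι) :
    ∃ m : ℕ, ¬ ({x : X | k x x ≤ (m : ℝ)} : Set X).Countable ∧
      ∃ K : ℝ, 0 < K ∧
        ∀ f : X → ℝ, (∃ C : ℝ, ∀ x, |f x| ≤ C) →
          ∃ h : H, (∀ x ∈ {x : X | k x x ≤ (m : ℝ)}, ι h x = f x) ∧
            (∀ x ∈ {x : X | k x x ≤ (m : ℝ)}, |f x| ≤ Real.sqrt m * ‖h‖) ∧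
            ‖h‖ ≤ K * ⨆ x : {x : X | k x x ≤ (m : ℝ)}, |f x| :=
  bounded_functions_in_restricted_RKHS_general hX H ι k Φ hfeat hrep hsub
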